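/- If (k,j) ∈ 𝔻 does not belong to the fork {(h,i), (h+1,2i-1), (h+1,2i)} and its support Δ_{k-1}^{(j)} is contained in neither Δ_{h+1}^{(4i-2)} nor Δ_{h+1}^{(4i-1)}, then χ_k^{(j)} ∘ φ_h^{(i)} = χ_k^{(j)}, i.e., χ_k^{(j)} is invariant under φ_h^{(i)}. -/

import Mathlib

open MeasureTheory Real Set
open scoped Classical

noncomputable section

/-- The dyadic interval `Δ_k^{(j)} = [(j-1)/2^k, j/2^k)`. -/
def dyadic (k : ℕ) (j : ℤ) : Set ℝ := Set.Ico (((j : ℝ) - 1) / 2 ^ k) ((j : ℝ) / 2 ^ k)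

/-- The Haar function `χ_k^{(j)}`. -/
def haar (k : ℕ) (j : ℤ) (t : ℝ) : ℝ :=
  if t ∈ dyadic k (2 * j - 1) then (2 : ℝ) ^ (((k : ℝ) - 1) / 2)
  else if t ∈ dyadic k (2 * j) then -(2 : ℝ) ^ (((k : ℝ) - 1) / 2)
  else 0

/-- Membership in the dyadic tree `𝔻`. -/
def memD (kj : ℕ × ℤ) : Prop := 1 ≤ kj.1 ∧ 1 ≤ kj.2 ∧ kj.2 ≤ 2 ^ (kj.1 - 1)

/-- The finite dyadic tree `𝔻_m^n`. -/
def Dtree (m n : ℕ) : Finset (ℕ × ℤ) :=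
  (Finset.Icc m n).biUnion fun k => (Finset.Icc (1 : ℤ) (2 ^ (k - 1))).image fun j => (k, j)

/-- Number of indices of `F` lying on the branch through `t`. -/
def branchCount (F : Finset (ℕ × ℤ)) (t : ℝ) : ℕ :=
  (F.filter fun kj => t ∈ dyadic (kj.1 - 1) kj.2).card

/-- The local height of a finite index set. -/
def lh (F : Finset (ℕ × ℤ)) : ℕ :=
  sSup {m | ∃ t ∈ Set.Ico (0 : ℝ) 1, branchCount F t = m}

/-- The transformation `φ_h^{(i)}` interchanging `Δ_{h+1}^{(4i-2)}` and `Δ_{h+1}^{(4i-1)}`. -/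
def phi (h : ℕ) (i : ℤ) (t : ℝ) : ℝ :=
  if t ∈ dyadic (h + 1) (4 * i - 2) then t + 1 / 2 ^ (h + 1)
  else if t ∈ dyadic (h + 1) (4 * i - 1) then t - 1 / 2 ^ (h + 1)
  else t

/-- The Haar type ideal norm `τ(T | ℋ(F))`. -/
def tau {X Y : Type*} [NormedAddCommGroup X] [NormedSpace ℝ X]
    [NormedAddCommGroup Y] [NormedSpace ℝ Y]
    (T : X →L[ℝ] Y) (F : Finset (ℕ × ℤ)) : ℝ :=
  sInf {c : ℝ | 0 ≤ c ∧ ∀ x : ℕ × ℤ → X,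
    Real.sqrt (∫ t in Set.Ico (0 : ℝ) 1, ‖∑ kj ∈ F, haar kj.1 kj.2 t • T (x kj)‖ ^ 2)
      ≤ c * Real.sqrt (∑ kj ∈ F, ‖x kj‖ ^ 2)}

end

lemma mem_dyadic_iff {k : ℕ} {m : ℤ} {t : ℝ} :
    t ∈ dyadic k m ↔ ((m : ℝ) - 1 ≤ 2 ^ k * t ∧ 2 ^ k * t < m) := by
  have hpos : (0:ℝ) < 2 ^ k := by positivity
  rw [dyadic, Set.mem_Ico, div_le_iff₀ hpos, lt_div_iff₀ hpos]
  constructor <;> rintro ⟨a, b⟩ <;> constructor <;> linarith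

lemma mem_dyadic_iff_floor {k : ℕ} {m : ℤ} {t : ℝ} :
    t ∈ dyadic k m ↔ ⌊(2:ℝ) ^ k * t⌋ = m - 1 := by
  rw [mem_dyadic_iff, Int.floor_eq_iff]
  push_cast
  constructor <;> rintro ⟨a, b⟩ <;> constructor <;> linarith

lemma haar_floor_eq {k : ℕ} {j : ℤ} {t s : ℝ} (hts : ⌊(2:ℝ) ^ k * t⌋ = ⌊(2:ℝ) ^ k * s⌋) :
    haar k j t = haar k j s := by
  unfold haar
  simp only [mem_dyadic_iff_floor, hts]

lemma haar_eq_zero_of_floor {k : ℕ} {j : ℤ} {t : ℝ} {n : ℤ} (hn : ⌊(2:ℝ) ^ k * t⌋ = n)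
    (hn1 : n ≠ 2 * j - 2) (hn2 : n ≠ 2 * j - 1) : haar k j t = 0 := by
  have c1 : t ∉ dyadic k (2 * j - 1) := by rw [mem_dyadic_iff_floor, hn]; omega
  have c2 : t ∉ dyadic k (2 * j) := by rw [mem_dyadic_iff_floor, hn]; omega
  rw [haar, if_neg c1, if_neg c2]

lemma half_left_subset {k : ℕ} (hk : 1 ≤ k) (j : ℤ) :
    dyadic k (2 * j - 1) ⊆ dyadic (k - 1) j := by
  obtain ⟨k', rfl⟩ : ∃ k', k = k' + 1 := ⟨k - 1, by omega⟩
  intro t ht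
  rw [mem_dyadic_iff] at ht ⊢
  have hp : (2:ℝ) ^ (k' + 1) = 2 * 2 ^ (k' + 1 - 1) := by
    simp [pow_succ]; ring
  rw [hp] at ht
  push_cast at ht ⊢
  constructor <;> simp only [Nat.add_sub_cancel] at * <;> nlinarith [ht.1, ht.2]

lemma half_right_subset {k : ℕ} (hk : 1 ≤ k) (j : ℤ) :
    dyadic k (2 * j) ⊆ dyadic (k - 1) j := by
  obtain ⟨k', rfl⟩ : ∃ k', k = k' + 1 := ⟨k - 1, by omega⟩
  intro t ht
  rw [mem_dyadic_iff] at ht ⊢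
  have hp : (2:ℝ) ^ (k' + 1) = 2 * 2 ^ (k' + 1 - 1) := by
    simp [pow_succ]; ring
  rw [hp] at ht
  push_cast at ht ⊢
  constructor <;> simp only [Nat.add_sub_cancel] at * <;> nlinarith [ht.1, ht.2]

lemma dyadic_subset_of_mem {a b : ℕ} (hab : a ≤ b) {m n : ℤ} {x : ℝ}
    (hxb : x ∈ dyadic b n) (hxa : x ∈ dyadic a m) : dyadic b n ⊆ dyadic a m := by
  obtain ⟨c, rfl⟩ : ∃ c, b = a + c := ⟨b - a, by omega⟩
  rw [mem_dyadic_iff] at hxb hxa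
  have hc0 : (0:ℝ) < 2 ^ c := by positivity
  have hpow : (2:ℝ) ^ (a + c) = 2 ^ c * 2 ^ a := by rw [pow_add]; ring
  rw [hpow, mul_assoc] at hxb
  have hInt1 : n ≤ 2 ^ c * m := by
    have hr : (n : ℝ) - 1 < (2:ℝ) ^ c * m :=
      lt_of_le_of_lt hxb.1 ((mul_lt_mul_iff_right₀ hc0).mpr hxa.2)
    have h' : (n : ℤ) - 1 < 2 ^ c * m := by exact_mod_cast (by push_cast; linarith : ((n - 1 : ℤ) : ℝ) < (((2:ℤ) ^ c * m : ℤ) : ℝ))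
    omega
  have hInt2 : (2 : ℤ) ^ c * (m - 1) ≤ n - 1 := by
    have hr : (2:ℝ) ^ c * ((m:ℝ) - 1) < (n : ℝ) :=
      lt_of_le_of_lt ((mul_le_mul_iff_right₀ hc0).mpr hxa.1) hxb.2
    have h' : (2:ℤ) ^ c * (m - 1) < n := by exact_mod_cast (by push_cast; linarith : (((2:ℤ) ^ c * (m - 1) : ℤ) : ℝ) < ((n : ℤ) : ℝ))
    omega
  intro y hy
  rw [mem_dyadic_iff] at hy ⊢
  rw [hpow, mul_assoc] at hy
  have c1 : (2:ℝ) ^ c * ((m:ℝ) - 1) ≤ (n:ℝ) - 1 := by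
    have : (((2:ℤ) ^ c * (m - 1) : ℤ) : ℝ) ≤ ((n - 1 : ℤ) : ℝ) := by exact_mod_cast hInt2
    push_cast at this; linarith
  have c2 : (n:ℝ) ≤ 2 ^ c * (m:ℝ) := by
    have : ((n : ℤ) : ℝ) ≤ (((2:ℤ) ^ c * m : ℤ) : ℝ) := by exact_mod_cast hInt1
    push_cast at this; linarith
  constructor
  · have := (mul_le_mul_iff_right₀ hc0).mp (le_trans c1 hy.1)
    linarith
  · exact (mul_lt_mul_iff_right₀ hc0).mp (lt_of_lt_of_le hy.2 c2)

theorem haar_comp_phi_invariant (h : ℕ) (i : ℤ) (hhi : memD (h, i))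
    (k : ℕ) (j : ℤ) (hkj : memD (k, j))
    (hfork : (k, j) ∉ ({(h, i), (h + 1, 2 * i - 1), (h + 1, 2 * i)} : Set (ℕ × ℤ)))
    (h1 : ¬ dyadic (k - 1) j ⊆ dyadic (h + 1) (4 * i - 2))
    (h2 : ¬ dyadic (k - 1) j ⊆ dyadic (h + 1) (4 * i - 1)) :
    ∀ t ∈ Set.Ico (0 : ℝ) 1, haar k j (phi h i t) = haar k j t := by
  have hk1 : 1 ≤ k := hkj.1
  have f1 : k = h → j ≠ i := by
    intro hk hj; exact hfork (by simp [hk, hj])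
  have f2 : k = h + 1 → j ≠ 2 * i - 1 := by
    intro hk hj; exact hfork (by simp [hk, hj])
  have f3 : k = h + 1 → j ≠ 2 * i := by
    intro hk hj; exact hfork (by simp [hk, hj])
  have hδpos : (0:ℝ) < 1 / 2 ^ (h + 1) := by positivity
  have hδ : (2:ℝ) ^ (h + 1) * (1 / 2 ^ (h + 1)) = 1 := by
    field_simp
  -- key lemma: shifting from A to B preserves haar
  have key : ∀ s : ℝ, s ∈ dyadic (h + 1) (4 * i - 2) →
      haar k j (s + 1 / 2 ^ (h + 1)) = haar k j s := by
    intro s hs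
    have hsR := mem_dyadic_iff.mp hs
    push_cast at hsR
    have hsB : s + 1 / 2 ^ (h + 1) ∈ dyadic (h + 1) (4 * i - 1) := by
      rw [mem_dyadic_iff]
      push_cast
      constructor <;> nlinarith [hsR.1, hsR.2, hδ]
    rcases (by omega : k = h + 1 ∨ k = h ∨ k + 2 ≤ h + 1 ∨ h + 2 ≤ k) with hc | hc | hc | hc
    · -- k = h + 1
      subst hc
      have fs : ⌊(2:ℝ) ^ (h + 1) * s⌋ = 4 * i - 3 := by
        have := mem_dyadic_iff_floor.mp hs; omega
      have fs' : ⌊(2:ℝ) ^ (h + 1) * (s + 1 / 2 ^ (h + 1))⌋ = 4 * i - 2 := by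
        have := mem_dyadic_iff_floor.mp hsB; omega
      rw [haar_eq_zero_of_floor fs' (by have := f3 rfl; omega) (by omega),
        haar_eq_zero_of_floor fs (by omega) (by have := f2 rfl; omega)]
    · -- k = h
      subst hc
      have hp : (2:ℝ) ^ (k + 1) = 2 * 2 ^ k := by ring
      rw [hp] at hsR
      have hhalf : (2:ℝ) ^ k * (1 / 2 ^ (k + 1)) = 1 / 2 := by
        rw [pow_succ]; field_simp
      have e : (2:ℝ) ^ k * (s + 1 / 2 ^ (k + 1)) = 2 ^ k * s + 1 / 2 := by
        rw [mul_add, hhalf]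
      have fs : ⌊(2:ℝ) ^ k * s⌋ = 2 * i - 2 := by
        rw [Int.floor_eq_iff]
        push_cast
        constructor <;> linarith [hsR.1, hsR.2]
      have fs' : ⌊(2:ℝ) ^ k * (s + 1 / 2 ^ (k + 1))⌋ = 2 * i - 1 := by
        rw [Int.floor_eq_iff, e]
        push_cast
        constructor <;> linarith [hsR.1, hsR.2]
      rw [haar_eq_zero_of_floor fs' (by omega) (by have := f1 rfl; omega),
        haar_eq_zero_of_floor fs (by have := f1 rfl; omega) (by omega)]
    · -- k + 2 ≤ h + 1, i.e. d := h + 1 - k ≥ 2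
      obtain ⟨d', hd⟩ : ∃ d', h + 1 = k + (d' + 2) := ⟨h - 1 - k, by omega⟩
      set d : ℕ := d' + 2 with hdd
      have hpow : (2:ℝ) ^ (h + 1) = 2 ^ d * 2 ^ k := by rw [hd, pow_add]; ring
      have hd0 : (0:ℝ) < 2 ^ d := by positivity
      set m : ℤ := ⌊(2:ℝ) ^ k * s⌋ with hm
      have hm1 : (m:ℝ) ≤ 2 ^ k * s := Int.floor_le _
      have hm2 : (2:ℝ) ^ k * s < m + 1 := Int.lt_floor_add_one _
      rw [hpow, mul_assoc] at hsR hδ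
      have hδ2 : (2:ℝ) ^ d * (2 ^ k * (1 / 2 ^ (h + 1))) = 1 := by
        rw [← mul_assoc, ← hpow]; field_simp
      -- integer bound : 4 * i - 1 ≤ 2 ^ d * (m + 1)
      have hI : (4 : ℤ) * i - 1 ≤ 2 ^ d * (m + 1) := by
        have hr : (4:ℝ) * i - 3 < (2:ℝ) ^ d * ((m:ℝ) + 1) := by
          have := (mul_lt_mul_iff_right₀ hd0).mpr hm2
          linarith [hsR.1]
        have h' : (4:ℤ) * i - 3 < 2 ^ d * (m + 1) := by
          exact_mod_cast (by push_cast; linarith : ((4 * i - 3 : ℤ) : ℝ) < (((2:ℤ) ^ d * (m + 1) : ℤ) : ℝ))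
        have hne : (2:ℤ) ^ d * (m + 1) ≠ 4 * i - 2 := by
          intro hcon
          have e4 : (2:ℤ) ^ d * (m + 1) = 4 * (2 ^ d' * (m + 1)) := by
            rw [hdd, pow_add]; ring
          rw [e4] at hcon
          omega
        omega
      have hIr : (4:ℝ) * i - 1 ≤ (2:ℝ) ^ d * ((m:ℝ) + 1) := by
        have := hI
        exact_mod_cast (by exact_mod_cast this : ((4 * i - 1 : ℤ) : ℝ) ≤ (((2:ℤ) ^ d * (m + 1) : ℤ) : ℝ))
      have eexp : (2:ℝ) ^ k * (s + 1 / 2 ^ (h + 1)) = 2 ^ k * s + 2 ^ k * (1 / 2 ^ (h + 1)) := by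
        ring
      have hδk_pos : (0:ℝ) < 2 ^ k * (1 / 2 ^ (h + 1)) := by positivity
      apply haar_floor_eq
      rw [← hm]
      rw [Int.floor_eq_iff]
      constructor
      · rw [eexp]
        linarith [hm1, hδk_pos]
      · have hup : (2:ℝ) ^ d * (2 ^ k * (s + 1 / 2 ^ (h + 1))) < 2 ^ d * ((m:ℝ) + 1) := by
          have e2 : (2:ℝ) ^ d * (2 ^ k * (s + 1 / 2 ^ (h + 1)))
              = 2 ^ d * (2 ^ k * s) + 2 ^ d * (2 ^ k * (1 / 2 ^ (h + 1))) := by ring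
          rw [e2, hδ2]
          linarith [hsR.2, hIr]
        have := (mul_lt_mul_iff_right₀ hd0).mp hup
        linarith
    · -- h + 2 ≤ k : support disjoint from A and B
      have hk2 : h + 1 ≤ k - 1 := by omega
      have hzA : ∀ u : ℝ, u ∈ dyadic (h + 1) (4 * i - 2) → haar k j u = 0 := by
        intro u hu
        have c1 : u ∉ dyadic k (2 * j - 1) := by
          intro hmem
          exact h1 (dyadic_subset_of_mem hk2 (half_left_subset hk1 j hmem) hu)
        have c2 : u ∉ dyadic k (2 * j) := by
          intro hmem
          exact h1 (dyadic_subset_of_mem hk2 (half_right_subset hk1 j hmem) hu)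
        rw [haar, if_neg c1, if_neg c2]
      have hzB : ∀ u : ℝ, u ∈ dyadic (h + 1) (4 * i - 1) → haar k j u = 0 := by
        intro u hu
        have c1 : u ∉ dyadic k (2 * j - 1) := by
          intro hmem
          exact h2 (dyadic_subset_of_mem hk2 (half_left_subset hk1 j hmem) hu)
        have c2 : u ∉ dyadic k (2 * j) := by
          intro hmem
          exact h2 (dyadic_subset_of_mem hk2 (half_right_subset hk1 j hmem) hu)
        rw [haar, if_neg c1, if_neg c2]
      rw [hzA s hs, hzB _ hsB]
  intro t _
  by_cases hA : t ∈ dyadic (h + 1) (4 * i - 2)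
  · rw [phi, if_pos hA]; exact key t hA
  · by_cases hB : t ∈ dyadic (h + 1) (4 * i - 1)
    · rw [phi, if_neg hA, if_pos hB]
      have hs : t - 1 / 2 ^ (h + 1) ∈ dyadic (h + 1) (4 * i - 2) := by
        rw [mem_dyadic_iff] at hB ⊢
        push_cast at hB ⊢
        constructor <;> nlinarith [hB.1, hB.2, hδ]
      have := key _ hs
      rw [sub_add_cancel] at this
      exact this.symm
    · rw [phi, if_neg hA, if_neg hB]
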